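/- Let F be an algebraically closed field of characteristic 0 and C ∈ M_n(F) a matrix all of whose Jordan blocks for the eigenvalue 0 have size 1 (equivalently, the algebraic multiplicity of 0 equals the nullity of C). Then for every integer k ≥ 1 there exists X ∈ M_n(F) with X^k = C. -/

import Mathlib

/-!
Let `p` be the minimal polynomial of the invertible block `A`. Interpolating `k`-th roots of the
roots of `p` gives a polynomial `g` such that `g ^ k - X` vanishes at every root of `p`, so
`g(A) ^ k - A` is nilpotent. In the commutative algebra `F[A]`, where `A` and `k` are units,
Newton's iteration for `T ^ k - A` corrects `g(A)` to an exact `k`-th root `B` of `A`, and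
`P (B ⊕ 0) P⁻¹` is then a `k`-th root of `C`.
-/

open Polynomial

theorem dvd_pow_natDegree_of_forall_isRoot {F : Type*} [Field F] [IsAlgClosed F] {p q : F[X]}
    (hp : p ≠ 0) (h : ∀ x, p.IsRoot x → q.IsRoot x) : p ∣ q ^ p.natDegree := by
  classical
  rcases eq_or_ne q 0 with rfl | hq
  · rcases Nat.eq_zero_or_pos p.natDegree with h0 | hpos
    · rw [h0, pow_zero, ← isUnit_iff_dvd_one, isUnit_iff_degree_eq_zero,
        degree_eq_natDegree hp, h0, Nat.cast_zero]
    · rw [zero_pow hpos.ne']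
      exact dvd_zero p
  rw [IsAlgClosed.dvd_iff_roots_le_roots hp (pow_ne_zero _ hq), roots_pow, Multiset.le_iff_count]
  intro x
  rw [Multiset.count_nsmul]
  by_cases hx : p.IsRoot x
  · have hqx : 1 ≤ q.roots.count x :=
      Multiset.one_le_count_iff_mem.mpr ((mem_roots hq).mpr (h x hx))
    calc p.roots.count x ≤ Multiset.card p.roots := Multiset.count_le_card _ _
      _ ≤ p.natDegree := card_roots' p
      _ ≤ p.natDegree * q.roots.count x := Nat.le_mul_of_pos_right _ hqx
  · simp [Multiset.count_eq_zero_of_notMem (fun hmem => hx (isRoot_of_mem_roots hmem))]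

theorem exists_forall_isRoot_pow_sub_X {F : Type*} [Field F] [IsAlgClosed F] [DecidableEq F]
    (s : Finset F) {k : ℕ} (hk : 0 < k) : ∃ g : F[X], ∀ x ∈ s, (g ^ k - X).IsRoot x := by
  choose μ hμ using fun x : F => IsAlgClosed.exists_pow_nat_eq x hk
  refine ⟨Lagrange.interpolate s id μ, fun x hx => ?_⟩
  have hgx : (Lagrange.interpolate s id μ).eval x = μ x :=
    Lagrange.eval_interpolate_at_node μ (Set.injOn_id _) hx
  rw [IsRoot.def, eval_sub, eval_pow, hgx, hμ, eval_X, sub_self]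

theorem exists_pow_eq_of_isNilpotent_pow_sub {S : Type*} [CommRing S] {k : ℕ}
    (hk : IsUnit (k : S)) {a y : S} (ha : IsUnit a) (hy : IsNilpotent (y ^ k - a)) :
    ∃ x : S, x ^ k = a := by
  have hyk : IsUnit (y ^ k) := by
    simpa using hy.isUnit_add_left_of_commute ha (Commute.all _ _)
  have hy' : IsUnit (y ^ (k - 1)) := by
    rcases Nat.eq_zero_or_pos k with rfl | hpos
    · simp
    · rw [← Nat.sub_add_cancel hpos, pow_succ] at hyk
      exact isUnit_of_mul_isUnit_left hyk
  obtain ⟨x, ⟨-, hx⟩, -⟩ := existsUnique_nilpotent_sub_and_aeval_eq_zero (P := X ^ k - C a)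
    (x := y) (by simpa using hy) (by simpa [derivative_X_pow] using hk.mul hy')
  exact ⟨x, by simpa [sub_eq_zero] using hx⟩

theorem Subalgebra.isUnit_of_isUnit_coe {F A : Type*} [Field F] [Ring A] [Algebra F A]
    {S : Subalgebra F A} [FiniteDimensional F S] {x : S} (hx : IsUnit (x : A)) : IsUnit x := by
  have := IsArtinianRing.of_finite F S
  refine IsArtinianRing.isUnit_iff_isRegular.mpr ⟨fun y z h => ?_, fun y z h => ?_⟩
  · exact Subtype.ext (hx.mul_left_cancel (congrArg Subtype.val h))
  · exact Subtype.ext (hx.mul_right_cancel (congrArg Subtype.val h))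

theorem exists_pow_eq_of_isUnit (F : Type*) {A : Type*} [Field F] [IsAlgClosed F] [Ring A]
    [Algebra F A] [FiniteDimensional F A] {a : A} (ha : IsUnit a) {k : ℕ} (hk : (k : F) ≠ 0) :
    ∃ b : A, b ^ k = a := by
  classical
  have hkpos : 0 < k := Nat.pos_of_ne_zero (by rintro rfl; exact hk Nat.cast_zero)
  have hp : minpoly F a ≠ 0 := minpoly.ne_zero_of_finite F a
  obtain ⟨g, hg⟩ := exists_forall_isRoot_pow_sub_X (minpoly F a).roots.toFinset hkpos
  have hdvd : minpoly F a ∣ (g ^ k - X) ^ (minpoly F a).natDegree :=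
    dvd_pow_natDegree_of_forall_isRoot hp fun x hx =>
      hg x (Multiset.mem_toFinset.mpr ((mem_roots hp).mpr hx))
  set a' : Algebra.adjoin F {a} := ⟨a, Algebra.self_mem_adjoin_singleton F a⟩
  have hnil : IsNilpotent (aeval a' g ^ k - a') := by
    refine (IsNilpotent.map_iff (f := (Algebra.adjoin F {a}).val) Subtype.val_injective).mp
      ⟨(minpoly F a).natDegree, ?_⟩
    simpa [aeval_subalgebra_coe] using minpoly.dvd_iff.mp hdvd
  have hkS : IsUnit (k : Algebra.adjoin F {a}) := by
    simpa using (IsUnit.mk0 _ hk).map (algebraMap F (Algebra.adjoin F {a}))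
  obtain ⟨x, hx⟩ := exists_pow_eq_of_isNilpotent_pow_sub hkS
    (Subalgebra.isUnit_of_isUnit_coe ha) hnil
  exact ⟨x, congrArg Subtype.val hx⟩

theorem Matrix.fromBlocks_zero_zero_pow {m n α : Type*} [Fintype m] [Fintype n] [DecidableEq m]
    [DecidableEq n] [Semiring α] (A : Matrix m m α) (D : Matrix n n α) (k : ℕ) :
    fromBlocks A 0 0 D ^ k = fromBlocks (A ^ k) 0 0 (D ^ k) := by
  induction k with
  | zero => simp
  | succ k ih => simp [pow_succ, ih, fromBlocks_multiply]

/-- If `C` is similar to `A ⊕ 0` with `A` invertible (i.e. all Jordan blocks of `C`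
for the eigenvalue 0 have size 1), then `C` has a `k`-th root for every `k ≥ 1`. -/
theorem stmt_3 {F : Type*} [Field F] [IsAlgClosed F] [CharZero F] {n : ℕ}
    (C : Matrix (Fin n) (Fin n) F)
    (h : ∃ (r m : ℕ) (A : Matrix (Fin r) (Fin r) F), IsUnit A ∧
      ∃ (e : (Fin r ⊕ Fin m) ≃ Fin n) (P : Matrix (Fin n) (Fin n) F), IsUnit P ∧
        C = P * Matrix.reindex e e (Matrix.fromBlocks A 0 0 0) * P⁻¹)
    (k : ℕ) (hk : 1 ≤ k) :
    ∃ X : Matrix (Fin n) (Fin n) F, X ^ k = C := by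
  obtain ⟨r, m, A, hA, e, P, ⟨u, rfl⟩, rfl⟩ := h
  obtain ⟨B, rfl⟩ := exists_pow_eq_of_isUnit F hA (k := k) (Nat.cast_ne_zero.mpr (by omega))
  rw [← Matrix.coe_units_inv]
  refine ⟨_, (Units.conj_pow u (Matrix.reindex e e (Matrix.fromBlocks B 0 0 0)) k).trans ?_⟩
  rw [← Matrix.coe_reindexAlgEquiv F F, ← map_pow, Matrix.fromBlocks_zero_zero_pow,
    zero_pow (by omega)]
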